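/- arXiv:2305.11776 — 2 statements merged into one kernel-verified Lean document; each statement's English description precedes it below -/
import Mathlib

section
/- Let Θ : [x₁, x₂] → ℝ be continuous and positive, let ω : [x₁, x₂] → ℝ be nonnegative and measurable, let a > 0, c ≥ 1 (playing the role of (1+δ₀)/(1-δ₀)), and define λ(x) = (1/(a·c)) ∫_{x₁}^{x} ω(t)²/Θ(t) dt. Fix m > 0 and x₀ ∈ (x₁, x₂), and let E = {x ∈ (x₀, x₂] : λ(x) < ω(x) - m}. Then ∫_E dx/Θ(x) ≤ a·c/m. -/
open MeasureTheory Set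

theorem stmt_5 (x₁ x₂ x₀ a c m : ℝ) (Θ ω : ℝ → ℝ)
    (hx : x₁ < x₂) (hx₀ : x₀ ∈ Set.Ioo x₁ x₂)
    (ha : 0 < a) (hc : 1 ≤ c) (hm : 0 < m)
    (hΘcont : ContinuousOn Θ (Set.Icc x₁ x₂))
    (hΘpos : ∀ x ∈ Set.Icc x₁ x₂, 0 < Θ x)
    (hωmeas : Measurable ω) (hωpos : ∀ x ∈ Set.Icc x₁ x₂, 0 ≤ ω x)
    (hint : IntegrableOn (fun t => (ω t) ^ 2 / Θ t) (Set.Icc x₁ x₂)) :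
    ∫ x in {x ∈ Set.Ioc x₀ x₂ |
        (1 / (a * c)) * ∫ t in x₁..x, (ω t) ^ 2 / Θ t < ω x - m}, 1 / Θ x ≤ a * c / m := by
  obtain ⟨hx₁x₀, hx₀x₂⟩ := hx₀
  have hac : 0 < a * c := mul_pos ha (lt_of_lt_of_le one_pos hc)
  set g : ℝ → ℝ := fun t => ω t ^ 2 / Θ t with hgdef
  have hgnn : ∀ t ∈ Icc x₁ x₂, 0 ≤ g t := fun t ht => div_nonneg (sq_nonneg _) (hΘpos t ht).le
  -- measurable a.e. version of g
  have hgm := hint.aestronglyMeasurable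
  set g₀ : ℝ → ℝ := hgm.mk g with hg₀def
  have hg₀meas : Measurable g₀ := hgm.stronglyMeasurable_mk.measurable
  have hg₀e : g =ᵐ[volume.restrict (Icc x₁ x₂)] g₀ := hgm.ae_eq_mk
  set h : ℝ → ℝ := (Ioc x₁ x₂).indicator (fun t => max (g₀ t) 0) with hhdef
  have hhm : Measurable h := (hg₀meas.max measurable_const).indicator measurableSet_Ioc
  have hh0 : ∀ t, 0 ≤ h t := fun t => Set.indicator_nonneg (fun t _ => le_max_right _ _) t
  have hhint : Integrable h volume := by
    refine IntegrableOn.integrable_indicator ?_ measurableSet_Ioc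
    have h1 : IntegrableOn g (Ioc x₁ x₂) volume := hint.mono_set Ioc_subset_Icc_self
    have h2 : IntegrableOn g₀ (Ioc x₁ x₂) volume := by
      refine h1.congr_fun_ae ?_
      exact ae_restrict_of_ae_restrict_of_subset Ioc_subset_Icc_self hg₀e
    exact h2.sup (integrable_zero _ _ _)
  -- g and h have the same interval integrals from x₁
  have hgh : ∀ x ∈ Icc x₁ x₂, (∫ t in x₁..x, g t) = ∫ t in x₁..x, h t := by
    intro x hxmem
    refine intervalIntegral.integral_congr_ae ?_
    have hICC : ∀ᵐ t ∂(volume : Measure ℝ), t ∈ Icc x₁ x₂ → g t = g₀ t :=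
      (ae_restrict_iff' measurableSet_Icc).1 hg₀e
    filter_upwards [hICC] with t ht htmem
    rw [Set.uIoc_of_le hxmem.1] at htmem
    have ht2 : t ∈ Ioc x₁ x₂ := ⟨htmem.1, htmem.2.trans hxmem.2⟩
    have ht3 : t ∈ Icc x₁ x₂ := ⟨ht2.1.le, ht2.2⟩
    rw [hhdef]
    simp only [Set.indicator_of_mem ht2]
    rw [← ht ht3, max_eq_left (hgnn t ht3)]
  -- the primitive
  set P : ℝ → ℝ := fun x => ∫ t in x₁..x, h t with hPdef
  have hPc : Continuous P :=
    intervalIntegral.continuous_primitive (fun _ _ => hhint.intervalIntegrable) x₁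
  have hPdiff : ∀ u v : ℝ, P v - P u = ∫ t in u..v, h t := fun u v =>
    intervalIntegral.integral_interval_sub_left hhint.intervalIntegrable
      hhint.intervalIntegrable
  set Λ : ℝ → ℝ := fun x => (1 / (a * c)) * P (max x x₁) with hΛdef
  have hΛmono : Monotone Λ := by
    intro u v huv
    have : 0 ≤ P (max v x₁) - P (max u x₁) := by
      rw [hPdiff]
      exact intervalIntegral.integral_nonneg (max_le_max huv le_rfl) (fun t _ => hh0 t)
    have h1 : P (max u x₁) ≤ P (max v x₁) := by linarith
    exact mul_le_mul_of_nonneg_left h1 (by positivity)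
  have hΛ0 : ∀ x, 0 ≤ Λ x := by
    intro x
    have : 0 ≤ P (max x x₁) :=
      intervalIntegral.integral_nonneg (le_max_right x x₁) (fun t _ => hh0 t)
    exact mul_nonneg (by positivity) this
  have hΛcont : Continuous Λ :=
    continuous_const.mul (hPc.comp (continuous_id.max continuous_const))
  have hΛeq : ∀ x ∈ Icc x₁ x₂, Λ x = (1 / (a * c)) * ∫ t in x₁..x, g t := by
    intro x hxm
    rw [hΛdef]
    simp only [max_eq_left hxm.1, hgh x hxm]
    rfl
  -- Λ as a Stieltjes function is the withDensity measure
  set τ : StieltjesFunction ℝ :=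
    ⟨Λ, hΛmono, fun x => (hΛcont.continuousAt).continuousWithinAt⟩ with hτdef
  have hΛpm : ∀ x, (0:ℝ) < Λ x + m := fun x => by linarith [hΛ0 x]
  have hτmeas : τ.measure = volume.withDensity (fun t => ENNReal.ofReal (h t / (a * c))) := by
    refine Measure.ext_of_Ioc' _ _ (fun u v _ => ?_) (fun u v huv => ?_)
    · rw [τ.measure_Ioc]; exact ENNReal.ofReal_ne_top
    · rw [τ.measure_Ioc, withDensity_apply _ measurableSet_Ioc]
      have hint' : Integrable (fun t => h t / (a * c)) (volume.restrict (Ioc u v)) :=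
        (hhint.div_const _).restrict
      rw [← ofReal_integral_eq_lintegral_ofReal hint'
        (Filter.Eventually.of_forall (fun t => div_nonneg (hh0 t) hac.le))]
      congr 1
      have key : Λ v - Λ u = ∫ t in Set.Ioc u v, h t / (a * c) := by
        have h1 : Λ v - Λ u = (1 / (a * c)) * ∫ t in (max u x₁)..(max v x₁), h t := by
          rw [hΛdef]; simp only []; rw [← hPdiff]; ring
        have h2 : (∫ t in (max u x₁)..(max v x₁), h t)
            = ∫ t in Set.Ioc (max u x₁) (max v x₁), h t :=
          intervalIntegral.integral_of_le (max_le_max huv.le le_rfl)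
        have h3 : Set.Ioc (max u x₁) (max v x₁) ∩ Set.Ioc x₁ x₂
            = Set.Ioc u v ∩ Set.Ioc x₁ x₂ := by
          ext t
          simp only [Set.mem_inter_iff, Set.mem_Ioc, max_lt_iff]
          constructor
          · rintro ⟨⟨⟨h1', h2'⟩, h3'⟩, h4', h5'⟩
            refine ⟨⟨h1', ?_⟩, h4', h5'⟩
            rcases le_total v x₁ with hv | hv
            · exact absurd (h3'.trans (max_le hv le_rfl)) (not_le.2 h4')
            · exact h3'.trans_eq (max_eq_left hv)
          · rintro ⟨⟨h1', h2'⟩, h3', h4'⟩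
            exact ⟨⟨⟨h1', h3'⟩, h2'.trans (le_max_left _ _)⟩, h3', h4'⟩
        have h4 : (∫ t in Set.Ioc (max u x₁) (max v x₁), h t) = ∫ t in Set.Ioc u v, h t := by
          rw [hhdef, setIntegral_indicator measurableSet_Ioc,
            setIntegral_indicator measurableSet_Ioc, h3]
        rw [h1, h2, h4, integral_div]
        ring
      rw [key]
  -- a.e. derivative of Λ
  have hτd : ∀ᵐ x ∂(volume : Measure ℝ), HasDerivAt Λ (h x / (a * c)) x := by
    have h1 := τ.ae_hasDerivAt
    have h2 : τ.measure.rnDeriv volume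
        =ᵐ[volume] fun t => ENNReal.ofReal (h t / (a * c)) := by
      rw [hτmeas]
      exact Measure.rnDeriv_withDensity volume ((hhm.div_const _).ennreal_ofReal)
    filter_upwards [h1, h2] with x hx he
    rw [he, ENNReal.toReal_ofReal (div_nonneg (hh0 x) hac.le)] at hx
    exact hx
  -- the monotone function F
  set F : ℝ → ℝ := fun x => -(a * c) * (Λ x + m)⁻¹ with hFdef
  have hFmono : Monotone F := by
    intro u v huv
    have h1 : (Λ v + m)⁻¹ ≤ (Λ u + m)⁻¹ :=
      inv_anti₀ (hΛpm u) (by linarith [hΛmono huv])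
    have := mul_le_mul_of_nonneg_left h1 hac.le
    simp only [hFdef, neg_mul]
    linarith
  have hFcont : Continuous F :=
    continuous_const.mul ((hΛcont.add continuous_const).inv₀ (fun x => (hΛpm x).ne'))
  set σ : StieltjesFunction ℝ :=
    ⟨F, hFmono, fun x => (hFcont.continuousAt).continuousWithinAt⟩ with hσdef
  set φ : ℝ → ℝ := fun x => h x / (Λ x + m) ^ 2 with hφdef
  have hφ0 : ∀ x, 0 ≤ φ x := fun x => div_nonneg (hh0 x) (sq_nonneg _)
  -- identify rnDeriv of σ.measure with φ
  have hφD : (fun x => (σ.measure.rnDeriv volume x).toReal) =ᵐ[volume] φ := by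
    filter_upwards [σ.ae_hasDerivAt, hτd] with x h1 h2
    have halg : ∀ k d q : ℝ, k ≠ 0 → -k * (-(d / k) / q ^ 2) = d / q ^ 2 := by
      intro k d q hk
      field_simp
    have h3 : HasDerivAt F (φ x) x := by
      have h4 := ((h2.add_const m).inv (hΛpm x).ne').const_mul (-(a * c))
      have h5 := halg (a * c) (h x) (Λ x + m) hac.ne'
      rw [h5] at h4
      exact h4
    exact h1.unique h3
  -- rewrite the set
  set E : Set ℝ := {x ∈ Set.Ioc x₀ x₂ | Λ x < ω x - m} with hEdef
  have hEset : {x ∈ Set.Ioc x₀ x₂ |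
      (1 / (a * c)) * ∫ t in x₁..x, (ω t) ^ 2 / Θ t < ω x - m} = E := by
    ext y
    simp only [hEdef, Set.mem_setOf_eq]
    refine and_congr_right (fun hy => ?_)
    rw [hΛeq y ⟨(hx₁x₀.trans hy.1).le, hy.2⟩]
  have hEsub : E ⊆ Icc x₁ x₂ := fun y hy => ⟨(hx₁x₀.trans hy.1.1).le, hy.1.2⟩
  have hEsub' : E ⊆ Set.Ioc x₀ x₂ := fun y hy => hy.1
  have hEmeas : MeasurableSet E :=
    measurableSet_Ioc.inter (measurableSet_lt hΛcont.measurable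
      (hωmeas.sub measurable_const))
  rw [hEset]
  -- integrability facts
  have hΘint : IntegrableOn (fun x => 1 / Θ x) E volume := by
    have h1 : ContinuousOn (fun x => 1 / Θ x) (Icc x₁ x₂) :=
      continuousOn_const.div hΘcont (fun x hx => (hΘpos x hx).ne')
    exact (h1.integrableOn_Icc).mono_set hEsub
  have hφint : Integrable φ volume := by
    refine (hhint.div_const (m ^ 2)).mono' ?_ ?_
    · exact (hhm.div ((hΛcont.add continuous_const).pow 2).measurable).aestronglyMeasurable
    · refine Filter.Eventually.of_forall (fun x => ?_)
      rw [Real.norm_eq_abs, abs_of_nonneg (hφ0 x)]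
      exact div_le_div_of_nonneg_left (hh0 x) (by positivity)
        (pow_le_pow_left₀ hm.le (by linarith [hΛ0 x]) 2)
  -- step 1 : pointwise bound on E
  have step1 : (∫ x in E, 1 / Θ x) ≤ ∫ x in E, φ x := by
    refine integral_mono_ae hΘint (hφint.restrict) ?_
    show ∀ᵐ x ∂(volume.restrict E), 1 / Θ x ≤ φ x
    rw [ae_restrict_iff' hEmeas]
    have hICC : ∀ᵐ t ∂(volume : Measure ℝ), t ∈ Icc x₁ x₂ → g t = g₀ t :=
      (ae_restrict_iff' measurableSet_Icc).1 hg₀e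
    filter_upwards [hICC] with t ht htE
    have htIcc : t ∈ Icc x₁ x₂ := hEsub htE
    have htIoc : t ∈ Ioc x₁ x₂ := ⟨hx₁x₀.trans htE.1.1, htE.1.2⟩
    have hht : h t = g t := by
      rw [hhdef]
      simp only [Set.indicator_of_mem htIoc]
      rw [← ht htIcc, max_eq_left (hgnn t htIcc)]
    have hωt : Λ t + m < ω t := by have := htE.2; linarith
    have hωtpos : 0 < ω t := lt_trans (hΛpm t) hωt
    have hΘt : 0 < Θ t := hΘpos t htIcc
    have key : 1 / Θ t = g t / (ω t) ^ 2 := by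
      rw [hgdef]
      field_simp
    rw [key, hφdef]
    simp only [hht]
    exact div_le_div_of_nonneg_left (hgnn t htIcc) (pow_pos (hΛpm t) 2)
      (pow_le_pow_left₀ (hΛpm t).le hωt.le 2)
  -- step 2 : enlarge the set
  have step2 : (∫ x in E, φ x) ≤ ∫ x in Set.Ioc x₀ x₂, φ x := by
    refine setIntegral_mono_set hφint.restrict ?_ (HasSubset.Subset.eventuallyLE hEsub')
    exact Filter.Eventually.of_forall (fun x => hφ0 x)
  -- step 3 : FTC-type inequality via Radon-Nikodym
  have step3 : (∫ x in Set.Ioc x₀ x₂, φ x) ≤ a * c / m := by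
    have h1 : (∫ x in Set.Ioc x₀ x₂, φ x)
        = ∫ x in Set.Ioc x₀ x₂, (σ.measure.rnDeriv volume x).toReal := by
      refine setIntegral_congr_ae measurableSet_Ioc ?_
      filter_upwards [hφD] with x hx _ using hx.symm
    have h2 : (∫ x in Set.Ioc x₀ x₂, (σ.measure.rnDeriv volume x).toReal)
        = (∫⁻ x in Set.Ioc x₀ x₂, σ.measure.rnDeriv volume x).toReal := by
      refine integral_toReal ((Measure.measurable_rnDeriv _ _).aemeasurable) ?_
      exact ae_mono Measure.restrict_le_self (Measure.rnDeriv_lt_top σ.measure volume)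
    have h3 : (∫⁻ x in Set.Ioc x₀ x₂, σ.measure.rnDeriv volume x)
        ≤ σ.measure (Set.Ioc x₀ x₂) := Measure.setLIntegral_rnDeriv_le _
    have h4 : σ.measure (Set.Ioc x₀ x₂) = ENNReal.ofReal (F x₂ - F x₀) := σ.measure_Ioc x₀ x₂
    have h5 : F x₂ - F x₀ ≤ a * c / m := by
      have A : (Λ x₀ + m)⁻¹ ≤ m⁻¹ := inv_anti₀ hm (by linarith [hΛ0 x₀])
      have B : 0 ≤ (Λ x₂ + m)⁻¹ := (inv_nonneg).2 (hΛpm x₂).le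
      have C := mul_le_mul_of_nonneg_left A hac.le
      have D' := mul_nonneg hac.le B
      rw [hFdef, div_eq_mul_inv]
      simp only [neg_mul]
      linarith
    calc (∫ x in Set.Ioc x₀ x₂, φ x)
        = (∫⁻ x in Set.Ioc x₀ x₂, σ.measure.rnDeriv volume x).toReal := by rw [h1, h2]
      _ ≤ (σ.measure (Set.Ioc x₀ x₂)).toReal := by
          refine ENNReal.toReal_mono ?_ h3
          rw [h4]; exact ENNReal.ofReal_ne_top
      _ = F x₂ - F x₀ := by
          rw [h4, ENNReal.toReal_ofReal (by linarith [hFmono hx₀x₂.le] : 0 ≤ F x₂ - F x₀)]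
      _ ≤ a * c / m := h5
  linarith
end

section
/- Let C₁ > 2, ε₂ = C₁ - 2 > 0, C₂ > 0, ρ > 1 with C₂/ρ^{ε₂} < 1/2, let M₀ > 0, and let (bₙ)_{n≥0} be a sequence of nonnegative reals such that for every n ≥ 1, either bₙ ≤ C₂·ρ^{C₁}·b_{n-1} or bₙ - b_{n-1} ≤ 2·e^{M₀}·(ρⁿ - ρ^{n-1}). Then the sequence bₙ/ρ^{n(C₁+ε₂)} is bounded: bₙ/ρ^{n(C₁+ε₂)} ≤ b₀ + Σ_{k=1}^{∞} 2·e^{M₀}·(1 - 1/ρ)/ρ^{k(C₁+ε₂-1)} for all n ≥ 0. -/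
theorem stmt_9 (C₁ ε₂ C₂ ρ M₀ : ℝ) (b : ℕ → ℝ)
    (hC₁ : 2 < C₁) (hε₂ : ε₂ = C₁ - 2) (hC₂ : 0 < C₂) (hρ : 1 < ρ)
    (hsmall : C₂ / ρ ^ ε₂ < 1 / 2) (hM₀ : 0 < M₀)
    (hb : ∀ n, 0 ≤ b n)
    (hcases : ∀ n : ℕ, 1 ≤ n →
      b n ≤ C₂ * ρ ^ C₁ * b (n - 1) ∨
      b n - b (n - 1) ≤ 2 * Real.exp M₀ * (ρ ^ (n : ℝ) - ρ ^ ((n : ℝ) - 1))) :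
    ∀ n : ℕ, b n / ρ ^ ((n : ℝ) * (C₁ + ε₂)) ≤
      b 0 + ∑' k : ℕ, 2 * Real.exp M₀ * (1 - 1 / ρ) / ρ ^ (((k : ℝ) + 1) * (C₁ + ε₂ - 1)) := by
  have hρ0 : (0:ℝ) < ρ := lt_trans one_pos hρ
  set D := C₁ + ε₂ with hDdef
  have hD1 : 1 < D - 1 := by rw [hDdef, hε₂]; linarith
  have hD0 : 0 < D := by linarith
  set c := 2 * Real.exp M₀ * (1 - 1 / ρ) with hc
  have hinv : 1 / ρ < 1 := by rw [div_lt_one hρ0]; exact hρ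
  have hc0 : 0 ≤ c := by
    have he : 0 < Real.exp M₀ := Real.exp_pos _
    rw [hc]; nlinarith
  -- key one-step estimate
  have key : ∀ m : ℕ, b (m+1) / ρ ^ (((m:ℝ)+1) * D) ≤
      b m / ρ ^ ((m:ℝ) * D) + c / ρ ^ (((m:ℝ)+1) * (D - 1)) := by
    intro m
    have hpos1 : 0 < ρ ^ ((m:ℝ) * D) := Real.rpow_pos_of_pos hρ0 _
    have hpos2 : 0 < ρ ^ (((m:ℝ)+1) * D) := Real.rpow_pos_of_pos hρ0 _
    have hpos3 : 0 < ρ ^ (((m:ℝ)+1) * (D-1)) := Real.rpow_pos_of_pos hρ0 _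
    rcases hcases (m+1) (by omega) with h | h
    · simp only [Nat.add_sub_cancel] at h
      have hε : (0:ℝ) < ρ ^ ε₂ := Real.rpow_pos_of_pos hρ0 _
      have hC2le : C₂ ≤ ρ ^ ε₂ := by
        have := (div_lt_iff₀ hε).mp hsmall
        nlinarith
      have hlt : C₂ * ρ ^ C₁ ≤ ρ ^ D := by
        have hεC : (0:ℝ) < ρ ^ C₁ := Real.rpow_pos_of_pos hρ0 _
        calc C₂ * ρ ^ C₁ ≤ ρ ^ ε₂ * ρ ^ C₁ :=
              mul_le_mul_of_nonneg_right hC2le hεC.le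
          _ = ρ ^ D := by rw [← Real.rpow_add hρ0, hDdef, add_comm]
      have hb1 : b (m+1) ≤ ρ ^ D * b m :=
        h.trans (mul_le_mul_of_nonneg_right hlt (hb m))
      have heq : ρ ^ (((m:ℝ)+1) * D) = ρ ^ ((m:ℝ) * D) * ρ ^ D := by
        rw [← Real.rpow_add hρ0]; ring_nf
      have hmain : b (m+1) / ρ ^ (((m:ℝ)+1)*D) ≤ b m / ρ ^ ((m:ℝ)*D) := by
        rw [div_le_div_iff₀ hpos2 hpos1, heq]
        nlinarith [hb m, Real.rpow_pos_of_pos hρ0 D, hb (m+1)]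
      exact hmain.trans (le_add_of_nonneg_right (div_nonneg hc0 hpos3.le))
    · simp only [Nat.add_sub_cancel] at h
      push_cast at h
      have hsub : ((m:ℝ) + 1) - 1 = (m:ℝ) := by ring
      rw [hsub] at h
      -- b (m+1) ≤ b m + 2 e (ρ^{m+1} - ρ^m)
      have hb1 : b (m+1) ≤ b m + 2 * Real.exp M₀ * (ρ ^ ((m:ℝ)+1) - ρ ^ (m:ℝ)) := by
        linarith
      have hmono : ρ ^ ((m:ℝ) * D) ≤ ρ ^ (((m:ℝ)+1) * D) := by
        apply Real.rpow_le_rpow_of_exponent_le hρ.le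
        nlinarith [Nat.cast_nonneg (α := ℝ) m]
      have step1 : b (m+1) / ρ ^ (((m:ℝ)+1)*D) ≤
          b m / ρ ^ (((m:ℝ)+1)*D)
            + 2 * Real.exp M₀ * (ρ ^ ((m:ℝ)+1) - ρ ^ (m:ℝ)) / ρ ^ (((m:ℝ)+1)*D) := by
        rw [← add_div]
        gcongr
      have step2 : b m / ρ ^ (((m:ℝ)+1)*D) ≤ b m / ρ ^ ((m:ℝ)*D) :=
        div_le_div_of_nonneg_left (hb m) hpos1 hmono
      have heq2 : 2 * Real.exp M₀ * (ρ ^ ((m:ℝ)+1) - ρ ^ (m:ℝ)) / ρ ^ (((m:ℝ)+1)*D)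
          = c / ρ ^ (((m:ℝ)+1)*(D-1)) := by
        have e1 : ρ ^ ((m:ℝ)+1) = ρ ^ (m:ℝ) * ρ :=
          Real.rpow_add_one hρ0.ne' (m:ℝ)
        have e2 : ρ ^ (((m:ℝ)+1)*D) = ρ ^ (((m:ℝ)+1)*(D-1)) * ρ ^ ((m:ℝ)+1) := by
          rw [← Real.rpow_add hρ0]; ring_nf
        have hpm : 0 < ρ ^ ((m:ℝ)) := Real.rpow_pos_of_pos hρ0 _
        rw [e2, e1, hc]
        field_simp
      calc b (m+1) / ρ ^ (((m:ℝ)+1)*D)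
          ≤ b m / ρ ^ (((m:ℝ)+1)*D)
            + 2 * Real.exp M₀ * (ρ ^ ((m:ℝ)+1) - ρ ^ (m:ℝ)) / ρ ^ (((m:ℝ)+1)*D) := step1
        _ ≤ b m / ρ ^ ((m:ℝ)*D) + c / ρ ^ (((m:ℝ)+1)*(D-1)) := by
            rw [heq2]; exact add_le_add_left step2 _
  -- partial-sum bound by induction
  have main : ∀ n : ℕ, b n / ρ ^ ((n:ℝ)*D) ≤
      b 0 + ∑ k ∈ Finset.range n, c / ρ ^ (((k:ℝ)+1)*(D-1)) := by
    intro n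
    induction n with
    | zero =>
      simp only [Nat.cast_zero, zero_mul, Real.rpow_zero, div_one, Finset.range_zero,
        Finset.sum_empty, add_zero, le_refl]
    | succ m ih =>
      rw [Finset.sum_range_succ, ← add_assoc]
      have h1 := key m
      have : b (m+1) / ρ ^ ((((m+1):ℕ):ℝ)*D) = b (m+1) / ρ ^ (((m:ℝ)+1)*D) := by
        push_cast; ring_nf
      rw [this]
      linarith
  -- summability of the geometric tail
  have hq1 : 1 < ρ ^ (D-1) :=
    (Real.one_lt_rpow_iff_of_pos hρ0).mpr (Or.inl ⟨hρ, by linarith⟩)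
  have hq0 : (0:ℝ) < ρ ^ (D-1) := Real.rpow_pos_of_pos hρ0 _
  have hrw : ∀ k : ℕ, c / ρ ^ (((k:ℝ)+1)*(D-1)) = (c / ρ ^ (D-1)) * (1 / ρ ^ (D-1))^k := by
    intro k
    have e3 : ρ ^ (((k:ℝ)+1)*(D-1)) = (ρ ^ (D-1))^k * ρ ^ (D-1) := by
      rw [show ((k:ℝ)+1)*(D-1) = (D-1)*(k:ℝ) + (D-1) by ring, Real.rpow_add hρ0,
        Real.rpow_mul hρ0.le, Real.rpow_natCast]
    rw [e3, div_pow, one_pow, div_mul_div_comm, mul_one, mul_comm ((ρ ^ (D-1))^k)]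
  have hsum : Summable (fun k : ℕ => c / ρ ^ (((k:ℝ)+1)*(D-1))) := by
    rw [show (fun k : ℕ => c / ρ ^ (((k:ℝ)+1)*(D-1)))
        = (fun k : ℕ => (c / ρ ^ (D-1)) * (1 / ρ ^ (D-1))^k) from funext hrw]
    apply Summable.mul_left
    apply summable_geometric_of_lt_one (by positivity)
    rw [div_lt_one hq0]; exact hq1
  intro n
  refine (main n).trans ?_
  have hle : ∑ k ∈ Finset.range n, c / ρ ^ (((k:ℝ)+1)*(D-1)) ≤
      ∑' k : ℕ, c / ρ ^ (((k:ℝ)+1)*(D-1)) :=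
    hsum.sum_le_tsum _ (fun k _ => div_nonneg hc0 (Real.rpow_pos_of_pos hρ0 _).le)
  linarith
end
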